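/- Let X_n ⊆ ℝ^d be a finite nonempty point cloud, f : X_n → ℝ a function, δ > 0, g ∈ (0, 1), and set r = max{|f(x) − f(y)| : x, y ∈ X_n, ‖x − y‖ ≤ δ} / g, assumed positive. For each k ∈ ℤ let I_k = [k(1−g)r, k(1−g)r + r]. Then for every edge of the δ-neighborhood graph on X_n, i.e., every pair x, y ∈ X_n with ‖x − y‖ ≤ δ, there exists k ∈ ℤ such that both f(x) ∈ I_k and f(y) ∈ I_k. -/
import Mathlib


/-- For a finite nonempty point cloud `X_n ⊆ ℝ^d`, a filter `f`, `δ > 0`, gain `g ∈ (0,1)`,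
and resolution `r = max{|f x − f y| : x, y ∈ X_n, ‖x − y‖ ≤ δ} / g` (assumed positive),
every edge of the δ-neighborhood graph has both endpoint filter values contained in a common
interval `I_k = [k(1-g)r, k(1-g)r + r]` of the regular cover. -/
theorem neighborhood_graph_edge_in_common_interval (d : ℕ)
    (Xn : Finset (EuclideanSpace ℝ (Fin d))) (hXn : Xn.Nonempty)
    (f : EuclideanSpace ℝ (Fin d) → ℝ) (δ : ℝ) (hδ : 0 < δ)
    (g : ℝ) (hg : g ∈ Set.Ioo (0 : ℝ) 1) (r : ℝ)
    (hr : r = sSup {v : ℝ | ∃ x ∈ Xn, ∃ y ∈ Xn, ‖x - y‖ ≤ δ ∧ v = |f x - f y|} / g)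
    (hrpos : 0 < r) :
    ∀ x ∈ Xn, ∀ y ∈ Xn, ‖x - y‖ ≤ δ →
      ∃ k : ℤ, f x ∈ Set.Icc ((k : ℝ) * (1 - g) * r) ((k : ℝ) * (1 - g) * r + r) ∧
        f y ∈ Set.Icc ((k : ℝ) * (1 - g) * r) ((k : ℝ) * (1 - g) * r + r) := by
  obtain ⟨hg0, hg1⟩ := hg
  intro x hx y hy hxy
  set S : Set ℝ := {v : ℝ | ∃ x ∈ Xn, ∃ y ∈ Xn, ‖x - y‖ ≤ δ ∧ v = |f x - f y|} with hS
  have hSfin : S.Finite := by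
    apply Set.Finite.subset (Set.Finite.image (fun p : _ × _ => |f p.1 - f p.2|)
      ((Xn.finite_toSet.prod Xn.finite_toSet)))
    rintro v ⟨a, ha, b, hb, -, rfl⟩
    exact ⟨(a, b), ⟨ha, hb⟩, rfl⟩
  have hmem : |f x - f y| ∈ S := ⟨x, hx, y, hy, hxy, rfl⟩
  have hle : |f x - f y| ≤ sSup S := le_csSup hSfin.bddAbove hmem
  have hsSup : sSup S = g * r := by
    rw [hr]; field_simp
  have hdiff : |f x - f y| ≤ g * r := hsSup ▸ hle
  set c : ℝ := (1 - g) * r with hc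
  have hcpos : 0 < c := mul_pos (by linarith) hrpos
  set m : ℝ := min (f x) (f y) with hm
  refine ⟨⌊m / c⌋, ?_, ?_⟩ <;>
  · have h1 : (⌊m / c⌋ : ℝ) * c ≤ m := by
      exact (le_div_iff₀ hcpos).mp (Int.floor_le _)
    have h2 : m < (⌊m / c⌋ : ℝ) * c + c := by
      have := Int.lt_floor_add_one (m / c)
      have := (div_lt_iff₀ hcpos).mp this
      nlinarith
    have habs := abs_le.mp hdiff
    have hmin1 : m ≤ f x := min_le_left _ _
    have hmin2 : m ≤ f y := min_le_right _ _
    have hup : f x ≤ m + g * r ∧ f y ≤ m + g * r := by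
      rcases min_cases (f x) (f y) with ⟨h, _⟩ | ⟨h, _⟩ <;> constructor <;>
        simp only [hm, h] <;> cases abs_le.mp hdiff <;> linarith
    constructor
    · calc (⌊m / c⌋ : ℝ) * (1 - g) * r = (⌊m / c⌋ : ℝ) * c := by rw [hc]; ring
        _ ≤ m := h1
        _ ≤ _ := by first | exact hmin1 | exact hmin2
    · have : m + g * r ≤ (⌊m / c⌋ : ℝ) * c + c + g * r := by linarith
      have hend : (⌊m / c⌋ : ℝ) * c + c + g * r = (⌊m / c⌋ : ℝ) * (1 - g) * r + r := by
        rw [hc]; ring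
      first
        | linarith [hup.1]
        | linarith [hup.2]
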